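/- Fix P ⊆ {1,…,n−1}. Let v, v' ∈ W^P with v ≠ v' and ℓ(v) ≥ ℓ(v'). Then for every w' ∈ W_P the Billey polynomial satisfies σ_v(v'w') = 0. Consequently, the matrix A = (σ_v(v'w')·σ_w(v'w')) with rows indexed by pairs (v,w) ∈ W^P × W_P and columns by pairs (v',w') ∈ W^P × W_P, with rows and columns ordered lexicographically subordinate to the length partial order, is block upper triangular with blocks indexed by pairs (v,v') ∈ W^P × W^P. -/

import Mathlib

noncomputable section

open MvPolynomial
open scoped Classical

/-- The polynomial ring `R = ℂ[x₁, …, xₙ]`. -/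
abbrev BilleyR (n : ℕ) := MvPolynomial (Fin n) ℂ

/-- The simple transposition `sᵢ = (i, i+1)` in the symmetric group on `{1, …, n}`. -/
def sTr (n : ℕ) (i : Fin (n - 1)) : Equiv.Perm (Fin n) :=
  Equiv.swap ⟨i.1, by have := i.isLt; omega⟩ ⟨i.1 + 1, by have := i.isLt; omega⟩

/-- The length `ℓ(w)`: the minimal `k` such that `w` is a product of `k` simple
transpositions. -/
def len (n : ℕ) (w : Equiv.Perm (Fin n)) : ℕ :=
  sInf {k | ∃ l : List (Fin (n - 1)), l.length = k ∧ (l.map (sTr n)).prod = w}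

/-- `l` is a reduced word for `w`: the product of the corresponding simple transpositions
is `w` and the length of `l` is `ℓ(w)`. -/
def IsRedWord (n : ℕ) (l : List (Fin (n - 1))) (w : Equiv.Perm (Fin n)) : Prop :=
  (l.map (sTr n)).prod = w ∧ l.length = len n w

/-- The simple root `αᵢ = xᵢ - x_{i+1}`. -/
def alphaR (n : ℕ) (i : Fin (n - 1)) : BilleyR n :=
  X ⟨i.1, by have := i.isLt; omega⟩ - X ⟨i.1 + 1, by have := i.isLt; omega⟩

/-- Given a word `b = (b₁, …, b_m)`, the polynomial
`r(j, u) = (s_{b₁} ⋯ s_{b_{j-1}})(α_{b_j})` (with `j` zero-indexed here). -/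
def rPoly (n : ℕ) (b : List (Fin (n - 1))) (j : Fin b.length) : BilleyR n :=
  rename (⇑(((b.take j.1).map (sTr n)).prod)) (alphaR n (b.get j))

/-- Billey's formula with respect to the word `b` for `u`:
`σ_v(u) = Σ ∏ₜ r(jₜ, u)`, summed over all strictly increasing index sequences
`j₁ < ⋯ < j_{ℓ(v)}` into `b` such that `s_{b_{j₁}} ⋯ s_{b_{j_{ℓ(v)}}} = v`. -/
def billeyWord (n : ℕ) (b : List (Fin (n - 1))) (v : Equiv.Perm (Fin n)) : BilleyR n :=
  ∑ J ∈ Finset.univ.filter (fun J : Finset (Fin b.length) =>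
      J.card = len n v ∧
        ((J.sort (· ≤ ·)).map (fun j => sTr n (b.get j))).prod = v),
    ∏ j ∈ J, rPoly n b j

/-- The Billey polynomial `σ_v(u)`, computed from a choice of reduced word for `u`
(its value is independent of this choice). -/
def sigma (n : ℕ) (v u : Equiv.Perm (Fin n)) : BilleyR n :=
  if h : ∃ b : List (Fin (n - 1)), IsRedWord n b u then billeyWord n h.choose v else 0

/-- The standard parabolic subgroup `W_P` generated by `{sᵢ : i ∈ P}`. -/
def WPar (n : ℕ) (P : Set (Fin (n - 1))) : Subgroup (Equiv.Perm (Fin n)) :=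
  Subgroup.closure (sTr n '' P)

/-- The set `W^P` of minimal-length coset representatives of `W / W_P`. -/
def minReps (n : ℕ) (P : Set (Fin (n - 1))) : Set (Equiv.Perm (Fin n)) :=
  {v | ∀ u ∈ WPar n P, len n v ≤ len n (v * u)}

/-!
Billey's formula writes `σ_v(u)` as a sum over subwords of a reduced word for `u` that are
reduced words for `v`, so `σ_v(u) = 0` unless `v ≤ u` in Bruhat order (subword property).
Bruhat order on `Sₙ` is taken in Ehresmann's tableau form, where the lifting property
"`v ≤ u` and `v < v sₖ` imply `v ≤ u sₖ`" is a check on a single row of rank counts.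
If `v ≤ v' w'` with `w' ∈ W_P`, every right descent `sₖ` of `w'` has `k ∈ P`; it is a descent
of `v' w'` (since `v'` increases on the blocks of `P`) but not of `v`, so lifting peels it
off, and by induction `v ≤ v'`. Together with `ℓ(v') ≤ ℓ(v)` this forces `v = v'`.
-/

section

variable {n : ℕ}

open Equiv

lemma List.map_get_sort_sublist {α : Type*} (l : List α) (J : Finset (Fin l.length)) :
    List.Sublist ((J.sort (· ≤ ·)).map l.get) l := by
  have hJ : List.Sublist (J.sort (· ≤ ·)) (List.finRange l.length) :=
    List.sublist_of_subperm_of_sortedLE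
      (List.subperm_of_subset (J.sort_nodup _) fun x _ => List.mem_finRange x)
      J.sortedLT_sort.sortedLE (List.sortedLT_finRange _).sortedLE
  simpa [List.map_get_finRange] using hJ.map l.get

lemma Equiv.Perm.eq_one_of_forall_apply_le {w : Perm (Fin n)} (h : ∀ a, w a ≤ a) : w = 1 := by
  have hsum : ∑ a, ((w a : Fin n) : ℕ) = ∑ a : Fin n, (a : ℕ) :=
    Equiv.sum_comp w fun a => (a : ℕ)
  ext a
  exact (Finset.sum_eq_sum_iff_of_le fun a _ => Fin.le_def.1 (h a)).1 hsum a (Finset.mem_univ a)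

def sTrLo (k : Fin (n - 1)) : Fin n := ⟨k.1, by have := k.isLt; omega⟩

def sTrHi (k : Fin (n - 1)) : Fin n := ⟨k.1 + 1, by have := k.isLt; omega⟩

@[simp] lemma val_sTrLo (k : Fin (n - 1)) : (sTrLo k).1 = k.1 := rfl

@[simp] lemma val_sTrHi (k : Fin (n - 1)) : (sTrHi k).1 = k.1 + 1 := rfl

lemma sTrLo_lt_sTrHi (k : Fin (n - 1)) : sTrLo k < sTrHi k := by simp [Fin.lt_def]

@[simp] lemma sTr_apply_sTrLo (k : Fin (n - 1)) : sTr n k (sTrLo k) = sTrHi k :=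
  Equiv.swap_apply_left _ _

@[simp] lemma sTr_apply_sTrHi (k : Fin (n - 1)) : sTr n k (sTrHi k) = sTrLo k :=
  Equiv.swap_apply_right _ _

@[simp] lemma sTr_sTr (k : Fin (n - 1)) (a : Fin n) : sTr n k (sTr n k a) = a :=
  Equiv.swap_apply_self _ _ _

lemma sTr_mul_self (k : Fin (n - 1)) : sTr n k * sTr n k = 1 := Equiv.swap_mul_self _ _

lemma val_sTr_apply (k : Fin (n - 1)) (a : Fin n) :
    (sTr n k a).1 = if a.1 = k.1 then k.1 + 1 else if a.1 = k.1 + 1 then k.1 else a.1 := by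
  rw [sTr, Equiv.swap_apply_def]
  split_ifs <;> simp_all [Fin.ext_iff]

lemma apply_sTrLo_ne_apply_sTrHi (w : Perm (Fin n)) (k : Fin (n - 1)) :
    w (sTrLo k) ≠ w (sTrHi k) :=
  w.injective.ne (sTrLo_lt_sTrHi k).ne

lemma sTr_mem_WPar {P : Set (Fin (n - 1))} {k : Fin (n - 1)} (hk : k ∈ P) :
    sTr n k ∈ WPar n P :=
  Subgroup.subset_closure ⟨k, hk, rfl⟩

lemma lt_of_forall_sTrLo_lt_sTrHi {α : Type*} [Preorder α] {f : Fin n → α} {a b : Fin n}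
    (hab : a < b)
    (h : ∀ k : Fin (n - 1), a ≤ sTrLo k → sTrHi k ≤ b → f (sTrLo k) < f (sTrHi k)) :
    f a < f b := by
  obtain ⟨a, ha⟩ := a
  obtain ⟨b, hb⟩ := b
  rw [Fin.mk_lt_mk] at hab
  induction b, hab using Nat.le_induction with
  | base => exact h ⟨a, by omega⟩ le_rfl le_rfl
  | succ m hm ih =>
    refine (ih (by omega) fun k hak hkm => h k hak ?_).trans (h ⟨m, by omega⟩ ?_ le_rfl)
    · simp only [Fin.le_def, val_sTrHi] at hkm ⊢; omega
    · simp only [Fin.le_def, val_sTrLo]; omega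

lemma exists_descent_of_ne_one {w : Perm (Fin n)} (hw : w ≠ 1) :
    ∃ k : Fin (n - 1), w (sTrHi k) < w (sTrLo k) := by
  by_contra! h
  have hmono : StrictMono w := fun a b hab => lt_of_forall_sTrLo_lt_sTrHi hab
    fun k _ _ => (h k).lt_of_ne (apply_sTrLo_ne_apply_sTrHi w k)
  exact hw ((Perm.monotone_iff w).1 hmono.monotone)

def inversions (w : Perm (Fin n)) : Finset (Fin n × Fin n) :=
  Finset.univ.filter fun p => p.1 < p.2 ∧ w p.2 < w p.1

def invCount (w : Perm (Fin n)) : ℕ := (inversions w).card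

lemma invCount_one : invCount (1 : Perm (Fin n)) = 0 := by
  rw [invCount, Finset.card_eq_zero, inversions, Finset.filter_eq_empty_iff]
  exact fun p _ h => h.1.not_gt h.2

lemma mem_inversions {w : Perm (Fin n)} {p : Fin n × Fin n} :
    p ∈ inversions w ↔ p.1 < p.2 ∧ w p.2 < w p.1 := by
  simp [inversions]

lemma prodMap_sTr_mem_inversions_mul_sTr_erase {w : Perm (Fin n)} {k : Fin (n - 1)}
    {p : Fin n × Fin n} (hp : p ∈ (inversions w).erase (sTrLo k, sTrHi k)) :
    Prod.map (sTr n k) (sTr n k) p ∈ (inversions (w * sTr n k)).erase (sTrLo k, sTrHi k) := by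
  obtain ⟨a, b⟩ := p
  simp only [Finset.mem_erase, mem_inversions, Prod.map, Perm.mul_apply, sTr_sTr, ne_eq,
    Prod.mk.injEq, Fin.ext_iff, Fin.lt_def, val_sTrLo, val_sTrHi, val_sTr_apply] at hp ⊢
  split_ifs <;> omega

lemma card_inversions_mul_sTr_erase (w : Perm (Fin n)) (k : Fin (n - 1)) :
    ((inversions (w * sTr n k)).erase (sTrLo k, sTrHi k)).card =
      ((inversions w).erase (sTrLo k, sTrHi k)).card :=
  Finset.card_bij' (fun p _ => Prod.map (sTr n k) (sTr n k) p)
    (fun p _ => Prod.map (sTr n k) (sTr n k) p)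
    (fun _ hp => by
      simpa [mul_assoc, sTr_mul_self] using prodMap_sTr_mem_inversions_mul_sTr_erase hp)
    (fun _ hp => prodMap_sTr_mem_inversions_mul_sTr_erase hp)
    (fun p _ => Prod.ext (sTr_sTr k p.1) (sTr_sTr k p.2))
    (fun p _ => Prod.ext (sTr_sTr k p.1) (sTr_sTr k p.2))

lemma invCount_mul_sTr_of_lt {w : Perm (Fin n)} {k : Fin (n - 1)}
    (h : w (sTrLo k) < w (sTrHi k)) : invCount (w * sTr n k) = invCount w + 1 := by
  have hmem : (sTrLo k, sTrHi k) ∈ inversions (w * sTr n k) :=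
    mem_inversions.2 ⟨sTrLo_lt_sTrHi k, by simpa using h⟩
  have hnmem : (sTrLo k, sTrHi k) ∉ inversions w := fun h' => (mem_inversions.1 h').2.not_gt h
  have := card_inversions_mul_sTr_erase w k
  rw [Finset.erase_eq_of_notMem hnmem] at this
  rw [invCount, invCount, ← this, Finset.card_erase_add_one hmem]

lemma invCount_mul_sTr_of_gt {w : Perm (Fin n)} {k : Fin (n - 1)}
    (h : w (sTrHi k) < w (sTrLo k)) : invCount w = invCount (w * sTr n k) + 1 := by
  simpa [mul_assoc, sTr_mul_self] using
    invCount_mul_sTr_of_lt (w := w * sTr n k) (k := k) (by simpa using h)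

lemma invCount_mul_sTr_le (w : Perm (Fin n)) (k : Fin (n - 1)) :
    invCount (w * sTr n k) ≤ invCount w + 1 := by
  rcases (apply_sTrLo_ne_apply_sTrHi w k).lt_or_gt with h | h
  · exact (invCount_mul_sTr_of_lt h).le
  · have := invCount_mul_sTr_of_gt h; omega

@[elab_as_elim]
lemma Equiv.Perm.induction_on_descent {motive : Perm (Fin n) → Prop} (w : Perm (Fin n))
    (one : motive 1)
    (mul : ∀ w k, w (sTrHi k) < w (sTrLo k) → motive (w * sTr n k) → motive w) :
    motive w := by
  induction hN : invCount w using Nat.strong_induction_on generalizing w with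
  | _ N ih =>
    by_cases hw : w = 1
    · exact hw ▸ one
    obtain ⟨k, hk⟩ := exists_descent_of_ne_one hw
    exact mul w k hk (ih _ (by rw [← hN, invCount_mul_sTr_of_gt hk]; omega) _ rfl)

abbrev wordProd (n : ℕ) (l : List (Fin (n - 1))) : Perm (Fin n) := (l.map (sTr n)).prod

lemma wordProd_concat (l : List (Fin (n - 1))) (k : Fin (n - 1)) :
    wordProd n (l ++ [k]) = wordProd n l * sTr n k := by
  simp [wordProd]

lemma invCount_wordProd_le (l : List (Fin (n - 1))) : invCount (wordProd n l) ≤ l.length := by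
  induction l using List.reverseRecOn with
  | nil => simp only [wordProd, List.map_nil, List.prod_nil, invCount_one, List.length_nil, le_refl]
  | append_singleton l k ih =>
    rw [wordProd_concat, List.length_append, List.length_singleton]
    exact (invCount_mul_sTr_le _ k).trans (by omega)

lemma exists_wordProd_eq (w : Perm (Fin n)) :
    ∃ l, wordProd n l = w ∧ l.length = invCount w := by
  induction w using Equiv.Perm.induction_on_descent with
  | one => exact ⟨[], rfl, invCount_one.symm⟩
  | mul w k hk ih =>
    obtain ⟨l, hl, hlen⟩ := ih
    refine ⟨l ++ [k], ?_, ?_⟩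
    · rw [wordProd_concat, hl, mul_assoc, sTr_mul_self, mul_one]
    · rw [List.length_append, hlen, invCount_mul_sTr_of_gt hk, List.length_singleton]

lemma len_eq_invCount (w : Perm (Fin n)) : len n w = invCount w := by
  obtain ⟨l, hl, hlen⟩ := exists_wordProd_eq w
  refine le_antisymm (Nat.sInf_le ⟨l, hlen, hl⟩) (le_csInf ⟨_, l, hlen, hl⟩ ?_)
  rintro m ⟨l', rfl, hl'⟩
  exact hl' ▸ invCount_wordProd_le l'

lemma exists_isRedWord (w : Perm (Fin n)) : ∃ l, IsRedWord n l w := by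
  obtain ⟨l, hl, hlen⟩ := exists_wordProd_eq w
  exact ⟨l, hl, by rw [hlen, len_eq_invCount]⟩

lemma invCount_wordProd_of_concat {l : List (Fin (n - 1))} {k : Fin (n - 1)}
    (h : invCount (wordProd n (l ++ [k])) = l.length + 1) :
    invCount (wordProd n l) = l.length ∧
      wordProd n l (sTrLo k) < wordProd n l (sTrHi k) := by
  rw [wordProd_concat] at h
  have hle := invCount_wordProd_le l
  rcases (apply_sTrLo_ne_apply_sTrHi (wordProd n l) k).lt_or_gt with hk | hk
  · rw [invCount_mul_sTr_of_lt hk] at h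
    exact ⟨by omega, hk⟩
  · have := invCount_mul_sTr_of_gt hk
    omega

def rankCount (w : Perm (Fin n)) (i j : ℕ) : ℕ :=
  (Finset.univ.filter fun a : Fin n => a.1 < i ∧ (w a).1 < j).card

/-- Ehresmann's tableau criterion: `v ≤ u` iff every rectangle `[0, i) × [0, j)` contains at
least as many points of the graph of `v` as of `u`. -/
def BruhatLE (v u : Perm (Fin n)) : Prop := ∀ i j, rankCount u i j ≤ rankCount v i j

lemma BruhatLE.refl (w : Perm (Fin n)) : BruhatLE w w := fun _ _ => le_rfl

lemma BruhatLE.trans {v u w : Perm (Fin n)} (h₁ : BruhatLE v u) (h₂ : BruhatLE u w) :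
    BruhatLE v w :=
  fun i j => (h₂ i j).trans (h₁ i j)

lemma rankCount_succ (w : Perm (Fin n)) (a : Fin n) (j : ℕ) :
    rankCount w (a.1 + 1) j = rankCount w a.1 j + if (w a).1 < j then 1 else 0 := by
  have hpt : (if (w a).1 < j then 1 else 0) =
      ∑ b, if b = a then (if (w b).1 < j then 1 else 0) else 0 := by simp
  unfold rankCount
  rw [Finset.card_filter, Finset.card_filter, hpt, ← Finset.sum_add_distrib]
  refine Finset.sum_congr rfl fun b _ => ?_
  have : b = a ↔ b.1 = a.1 := Fin.ext_iff
  split_ifs <;> simp_all <;> omega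

lemma rankCount_mul_sTr_of_ne (w : Perm (Fin n)) {k : Fin (n - 1)} {i : ℕ} (hi : i ≠ k.1 + 1) :
    rankCount (w * sTr n k) i = rankCount w i := by
  funext j
  have hrow : ∀ a, (sTr n k a).1 < i ↔ a.1 < i := by
    intro a
    rw [val_sTr_apply]
    split_ifs <;> omega
  calc (Finset.univ.filter fun a => a.1 < i ∧ (w (sTr n k a)).1 < j).card
      = (Finset.univ.filter fun a => (sTr n k a).1 < i ∧ (w (sTr n k a)).1 < j).card := by
        simp only [hrow]
    _ = rankCount w i j := by
        rw [rankCount, Finset.card_filter, Finset.card_filter]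
        exact Equiv.sum_comp (sTr n k) fun a => if a.1 < i ∧ (w a).1 < j then 1 else 0

lemma rankCount_mul_sTr_mid (w : Perm (Fin n)) (k : Fin (n - 1)) (j : ℕ) :
    rankCount (w * sTr n k) (k.1 + 1) j =
      rankCount w k.1 j + if (w (sTrHi k)).1 < j then 1 else 0 := by
  have := rankCount_succ (w * sTr n k) (sTrLo k) j
  simp only [val_sTrLo, Perm.mul_apply, sTr_apply_sTrLo] at this
  rw [this, rankCount_mul_sTr_of_ne w (by omega)]

lemma rankCount_add_two (w : Perm (Fin n)) (k : Fin (n - 1)) (j : ℕ) :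
    rankCount w (k.1 + 2) j = rankCount w k.1 j + (if (w (sTrLo k)).1 < j then 1 else 0) +
      if (w (sTrHi k)).1 < j then 1 else 0 := by
  have h₀ := rankCount_succ w (sTrLo k) j
  have h₁ := rankCount_succ w (sTrHi k) j
  simp only [val_sTrLo, val_sTrHi] at h₀ h₁
  rw [h₁, h₀]

lemma BruhatLE.of_rankCount_eq_off_row {v u v' u' : Perm (Fin n)} (k : Fin (n - 1))
    (h : BruhatLE v u) (hv : ∀ i ≠ k.1 + 1, rankCount v' i = rankCount v i)
    (hu : ∀ i ≠ k.1 + 1, rankCount u' i = rankCount u i)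
    (hrow : ∀ j, rankCount u' (k.1 + 1) j ≤ rankCount v' (k.1 + 1) j) : BruhatLE v' u' := by
  intro i j
  by_cases hi : i = k.1 + 1
  · exact hi ▸ hrow j
  · rw [hv i hi, hu i hi]
    exact h i j

lemma bruhatLE_mul_sTr {w : Perm (Fin n)} {k : Fin (n - 1)} (hk : w (sTrLo k) < w (sTrHi k)) :
    BruhatLE w (w * sTr n k) := by
  refine (BruhatLE.refl w).of_rankCount_eq_off_row k (fun _ _ => rfl)
    (fun _ hi => rankCount_mul_sTr_of_ne w hi) fun j => ?_
  have := rankCount_succ w (sTrLo k) j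
  rw [Fin.lt_def] at hk
  simp only [val_sTrLo] at this
  rw [rankCount_mul_sTr_mid, this]
  split_ifs <;> omega

lemma BruhatLE.mul_sTr {v u : Perm (Fin n)} {k : Fin (n - 1)} (h : BruhatLE v u)
    (hu : u (sTrLo k) < u (sTrHi k)) : BruhatLE (v * sTr n k) (u * sTr n k) := by
  refine h.of_rankCount_eq_off_row k (fun _ hi => rankCount_mul_sTr_of_ne v hi)
    (fun _ hi => rankCount_mul_sTr_of_ne u hi) fun j => ?_
  have h₀ := h k.1 j
  have h₂ := h (k.1 + 2) j
  rw [rankCount_add_two, rankCount_add_two] at h₂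
  rw [Fin.lt_def] at hu
  rw [rankCount_mul_sTr_mid, rankCount_mul_sTr_mid]
  split_ifs at h₂ ⊢ <;> omega

lemma BruhatLE.le_mul_sTr {v u : Perm (Fin n)} {k : Fin (n - 1)} (h : BruhatLE v u)
    (hv : v (sTrLo k) < v (sTrHi k)) :
    BruhatLE v (u * sTr n k) := by
  refine h.of_rankCount_eq_off_row k (fun _ _ => rfl)
    (fun _ hi => rankCount_mul_sTr_of_ne u hi) fun j => ?_
  have h₀ := h k.1 j
  have h₂ := h (k.1 + 2) j
  have h₁ := rankCount_succ v (sTrLo k) j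
  rw [rankCount_add_two, rankCount_add_two] at h₂
  rw [Fin.lt_def] at hv
  simp only [val_sTrLo] at h₁
  rw [rankCount_mul_sTr_mid, h₁]
  split_ifs at h₂ ⊢ <;> omega

lemma BruhatLE.mul_sTr_of_gt {v u : Perm (Fin n)} {k : Fin (n - 1)} (h : BruhatLE v u)
    (hv : v (sTrHi k) < v (sTrLo k)) : BruhatLE (v * sTr n k) (u * sTr n k) := by
  have hvs : (v * sTr n k) (sTrLo k) < (v * sTr n k) (sTrHi k) := by simpa using hv
  have hsv : BruhatLE (v * sTr n k) v := by
    simpa [mul_assoc, sTr_mul_self] using bruhatLE_mul_sTr hvs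
  exact (hsv.trans h).le_mul_sTr hvs

lemma eq_one_of_bruhatLE_one {w : Perm (Fin n)} (h : BruhatLE w 1) : w = 1 := by
  refine Perm.eq_one_of_forall_apply_le fun a => ?_
  set S₁ := Finset.univ.filter fun b : Fin n => b.1 < a.1 + 1 ∧ ((1 : Perm (Fin n)) b).1 < a.1 + 1
  have hsub : (Finset.univ.filter fun b : Fin n => b.1 < a.1 + 1 ∧ (w b).1 < a.1 + 1) ⊆ S₁ :=
    Finset.monotone_filter_right _ fun _ _ hb => ⟨hb.1, hb.1⟩
  have ha : a ∈ S₁ := by simp [S₁]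
  rw [← Finset.eq_of_subset_of_card_le hsub (h _ _), Finset.mem_filter] at ha
  exact Fin.le_def.2 (by omega)

lemma BruhatLE.eq_or_invCount_lt {w u : Perm (Fin n)} (h : BruhatLE w u) :
    w = u ∨ invCount w < invCount u := by
  induction u using Perm.induction_on_descent generalizing w with
  | one => exact .inl (eq_one_of_bruhatLE_one h)
  | mul u k hk ih =>
    have hu := invCount_mul_sTr_of_gt hk
    rcases (apply_sTrLo_ne_apply_sTrHi w k).lt_or_gt with hw | hw
    · rcases ih (h.le_mul_sTr hw) with rfl | hlt <;> omega
    · have := invCount_mul_sTr_of_gt hw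
      rcases ih (h.mul_sTr_of_gt hw) with heq | hlt
      · exact .inl (mul_right_cancel heq)
      · omega

lemma bruhatLE_wordProd_of_sublist {b c : List (Fin (n - 1))} (hcb : List.Sublist c b)
    (hb : invCount (wordProd n b) = b.length) (hc : invCount (wordProd n c) = c.length) :
    BruhatLE (wordProd n c) (wordProd n b) := by
  induction b using List.reverseRecOn generalizing c with
  | nil => exact List.sublist_nil.1 hcb ▸ BruhatLE.refl _
  | append_singleton l k ih =>
    rw [List.length_append, List.length_singleton] at hb
    obtain ⟨hl, hlk⟩ := invCount_wordProd_of_concat hb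
    rw [wordProd_concat]
    obtain ⟨c', c'', rfl, hc'l, hc''⟩ := List.sublist_append_iff.1 hcb
    rcases List.sublist_singleton.1 hc'' with rfl | rfl
    · rw [List.append_nil] at hc ⊢
      exact (ih hc'l hl hc).trans (bruhatLE_mul_sTr hlk)
    · rw [List.length_append, List.length_singleton] at hc
      rw [wordProd_concat]
      exact (ih hc'l hl (invCount_wordProd_of_concat hc).1).mul_sTr hlk

lemma IsRedWord.bruhatLE_of_sublist {b c : List (Fin (n - 1))} {u v : Perm (Fin n)}
    (hb : IsRedWord n b u) (hcb : List.Sublist c b) (hc : IsRedWord n c v) : BruhatLE v u := by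
  obtain ⟨rfl, hb⟩ := hb
  obtain ⟨rfl, hc⟩ := hc
  rw [len_eq_invCount] at hb hc
  exact bruhatLE_wordProd_of_sublist hcb hb.symm hc.symm

lemma BruhatLE.eq_or_len_lt {w u : Perm (Fin n)} (h : BruhatLE w u) :
    w = u ∨ len n w < len n u := by
  simpa only [len_eq_invCount] using h.eq_or_invCount_lt

/-- Positions `a` and `b` lie in the same block of `W_P`: no cut between positions `k` and
`k + 1` with `k ∉ P` separates them. -/
def SameBlock (P : Set (Fin (n - 1))) (a b : Fin n) : Prop :=
  ∀ k ∉ P, (a.1 ≤ k.1 ↔ b.1 ≤ k.1)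

lemma SameBlock.symm {P : Set (Fin (n - 1))} {a b : Fin n} (h : SameBlock P a b) :
    SameBlock P b a :=
  fun k hk => (h k hk).symm

lemma SameBlock.trans {P : Set (Fin (n - 1))} {a b c : Fin n} (h₁ : SameBlock P a b)
    (h₂ : SameBlock P b c) : SameBlock P a c :=
  fun k hk => (h₁ k hk).trans (h₂ k hk)

lemma sameBlock_sTr_apply {P : Set (Fin (n - 1))} {k : Fin (n - 1)} (hk : k ∈ P) (a : Fin n) :
    SameBlock P (sTr n k a) a := by
  intro j hj
  have hjk : j.1 ≠ k.1 := fun h => hj (Fin.ext h ▸ hk)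
  rw [val_sTr_apply]
  split_ifs <;> omega

lemma sameBlock_apply_of_mem_WPar {P : Set (Fin (n - 1))} {w : Perm (Fin n)}
    (hw : w ∈ WPar n P) (a : Fin n) : SameBlock P (w a) a := by
  induction hw using Subgroup.closure_induction generalizing a with
  | mem x hx =>
    obtain ⟨k, hk, rfl⟩ := hx
    exact sameBlock_sTr_apply hk a
  | one => exact fun _ _ => Iff.rfl
  | mul x y _ _ hx hy => exact (hx (y a)).trans (hy a)
  | inv x _ hx => simpa using (hx (x⁻¹ a)).symm

lemma mem_of_mem_WPar_of_descent {P : Set (Fin (n - 1))} {w : Perm (Fin n)} {k : Fin (n - 1)}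
    (hw : w ∈ WPar n P) (hk : w (sTrHi k) < w (sTrLo k)) : k ∈ P := by
  by_contra hkP
  have hlo := (sameBlock_apply_of_mem_WPar hw (sTrLo k) k hkP).2 le_rfl
  have hhi := sameBlock_apply_of_mem_WPar hw (sTrHi k) k hkP
  rw [Fin.lt_def] at hk
  simp only [val_sTrHi] at hhi
  omega

lemma apply_sTrLo_lt_of_mem_minReps {P : Set (Fin (n - 1))} {v : Perm (Fin n)}
    (hv : v ∈ minReps n P) {k : Fin (n - 1)} (hk : k ∈ P) : v (sTrLo k) < v (sTrHi k) := by
  refine (apply_sTrLo_ne_apply_sTrHi v k).lt_or_gt.resolve_right fun hdesc => ?_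
  have := hv _ (sTr_mem_WPar hk)
  rw [len_eq_invCount, len_eq_invCount, invCount_mul_sTr_of_gt hdesc] at this
  omega

lemma apply_lt_of_mem_minReps_of_sameBlock {P : Set (Fin (n - 1))} {v : Perm (Fin n)}
    (hv : v ∈ minReps n P) {a b : Fin n} (hab : a < b) (hs : SameBlock P a b) : v a < v b := by
  refine lt_of_forall_sTrLo_lt_sTrHi hab fun k hak hkb => apply_sTrLo_lt_of_mem_minReps hv ?_
  by_contra hkP
  have := hs k hkP
  simp only [Fin.le_def, val_sTrLo, val_sTrHi] at hak hkb
  omega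

lemma BruhatLE.of_le_mul_mem_WPar {P : Set (Fin (n - 1))} {v v' w' : Perm (Fin n)}
    (hv : v ∈ minReps n P) (hv' : v' ∈ minReps n P) (hw' : w' ∈ WPar n P)
    (h : BruhatLE v (v' * w')) : BruhatLE v v' := by
  induction w' using Perm.induction_on_descent with
  | one => simpa using h
  | mul w' k hk ih =>
    have hkP := mem_of_mem_WPar_of_descent hw' hk
    have hblock : SameBlock P (w' (sTrHi k)) (w' (sTrLo k)) :=
      ((sameBlock_apply_of_mem_WPar hw' _).trans
        (sTr_apply_sTrLo k ▸ sameBlock_sTr_apply hkP (sTrLo k))).trans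
        (sameBlock_apply_of_mem_WPar hw' _).symm
    have hdesc : (v' * w') (sTrHi k) < (v' * w') (sTrLo k) :=
      apply_lt_of_mem_minReps_of_sameBlock hv' hk hblock
    refine ih (mul_mem hw' (sTr_mem_WPar hkP)) ?_
    simpa [mul_assoc] using h.le_mul_sTr (u := v' * w') (apply_sTrLo_lt_of_mem_minReps hv hkP)

lemma billeyWord_eq_zero {b : List (Fin (n - 1))} {v : Perm (Fin n)}
    (h : ∀ c, List.Sublist c b → wordProd n c = v → c.length ≠ len n v) :
    billeyWord n b v = 0 := by
  refine Finset.sum_eq_zero fun J hJ => ?_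
  obtain ⟨hcard, hprod⟩ := (Finset.mem_filter.1 hJ).2
  refine absurd ?_ (h _ (b.map_get_sort_sublist J) ?_)
  · rw [List.length_map, Finset.length_sort, hcard]
  · rw [wordProd, List.map_map]
    exact hprod

lemma sigma_eq_zero_of_not_bruhatLE {v u : Perm (Fin n)} (h : ¬BruhatLE v u) :
    sigma n v u = 0 := by
  have hex := exists_isRedWord u
  rw [sigma, dif_pos hex]
  exact billeyWord_eq_zero fun c hcb hc hclen =>
    h (hex.choose_spec.bruhatLE_of_sublist hcb ⟨hc, hclen⟩)

end

theorem billey_block_upper_triangular_general (n : ℕ) (P : Set (Fin (n - 1)))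
    (v v' : Equiv.Perm (Fin n)) (hv : v ∈ minReps n P) (hv' : v' ∈ minReps n P)
    (hne : v ≠ v') (hlen : len n v' ≤ len n v) :
    (∀ w' ∈ WPar n P, sigma n v (v' * w') = 0) ∧
      ∀ w ∈ WPar n P, ∀ w' ∈ WPar n P,
        sigma n v (v' * w') * sigma n w (v' * w') = 0 := by
  have hvanish : ∀ w' ∈ WPar n P, sigma n v (v' * w') = 0 := by
    intro w' hw'
    refine sigma_eq_zero_of_not_bruhatLE fun hle => ?_
    rcases (hle.of_le_mul_mem_WPar hv hv' hw').eq_or_len_lt with heq | hlt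
    · exact hne heq
    · omega
  exact ⟨hvanish, fun w _ w' hw' => by rw [hvanish w' hw', zero_mul]⟩

/-- Fix `P ⊆ {1, …, n-1}`. If `v, v\' ∈ W^P` with `v ≠ v\'` and
`ℓ(v) ≥ ℓ(v\')`, then `σ_v(v\'w\') = 0` for every `w\' ∈ W_P`. Consequently every entry
`σ_v(v\'w\')·σ_w(v\'w\')` of the corresponding block of the matrix `A` vanishes, so `A`
(with rows and columns ordered lexicographically subordinate to the length partial order)
is block upper triangular with blocks indexed by pairs `(v, v\') ∈ W^P × W^P`. -/
theorem billey_block_upper_triangular (n : ℕ) (hn : 2 ≤ n) (P : Set (Fin (n - 1)))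
    (v v' : Equiv.Perm (Fin n)) (hv : v ∈ minReps n P) (hv' : v' ∈ minReps n P)
    (hne : v ≠ v') (hlen : len n v' ≤ len n v) :
    (∀ w' ∈ WPar n P, sigma n v (v' * w') = 0) ∧
      ∀ w ∈ WPar n P, ∀ w' ∈ WPar n P,
        sigma n v (v' * w') * sigma n w (v' * w') = 0 :=
  billey_block_upper_triangular_general n P v v' hv hv' hne hlen

end
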